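/- Let x be a θ-cyclic point with cubic support graph G_x, and let U ⊆ V_n be a minimal critical cut of G_x (i.e., no proper subset S ⊂ U defines a critical cut of G_x). Then the contracted graph G_x^U contains no critical cuts. -/

import Mathlib

/-!
Critical cuts are closed under complementation, so a critical cut `S` of `G_x^U` may be taken
to avoid the pseudovertex. Its preimage `S'` is then a proper subset of `U`. Because the three
edges leaving `U` have distinct endpoints in `U`, every vertex of `U` has at most one support
neighbour outside `U`; hence contraction maps the support edges crossing `S'` bijectively, and
with the same values, onto those crossing `S`. So `S'` is a critical cut of `G_x`, contradicting
the minimality of `U`.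
-/

open scoped Classical

noncomputable section

namespace TSPPaper

variable {V : Type*} [Fintype V] [DecidableEq V]

/-- The sum of `x` over the edges crossing the cut `U` (each crossing edge counted once). -/
def cutSum (x : Sym2 V → ℝ) (U : Finset V) : ℝ :=
  ∑ u ∈ U, ∑ v ∈ Uᶜ, x s(u, v)

/-- Membership in the subtour elimination polytope `SUBT(K_n)`. -/
def inSUBT (x : Sym2 V → ℝ) : Prop :=
  (∀ e : Sym2 V, e.IsDiag → x e = 0) ∧
  (∀ e : Sym2 V, 0 ≤ x e) ∧ (∀ e : Sym2 V, x e ≤ 1) ∧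
  (∀ v : V, cutSum x {v} = 2) ∧
  (∀ U : Finset V, U.Nonempty → U ≠ Finset.univ → 2 ≤ cutSum x U)

/-- The simple graph underlying the support of a multigraph given by edge multiplicities. -/
def supportGraph (F : Sym2 V → ℕ) : SimpleGraph V where
  Adj u v := u ≠ v ∧ 0 < F s(u, v)
  symm := ⟨fun u v h => ⟨h.1.symm, by rw [Sym2.eq_swap]; exact h.2⟩⟩
  loopless := ⟨fun u h => h.1 rfl⟩

/-- The support graph of a real edge vector. -/
def suppGraph (x : Sym2 V → ℝ) : SimpleGraph V where
  Adj u v := u ≠ v ∧ 0 < x s(u, v)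
  symm := ⟨fun u v h => ⟨h.1.symm, by rw [Sym2.eq_swap]; exact h.2⟩⟩
  loopless := ⟨fun u h => h.1 rfl⟩

/-- Degree of a vertex in a multigraph given by edge multiplicities. -/
def multiDeg (F : Sym2 V → ℕ) (v : V) : ℕ := ∑ u : V, F s(v, u)

/-- A tour: a spanning connected Eulerian multigraph (with no loops). -/
def IsTour (F : Sym2 V → ℕ) : Prop :=
  (∀ e : Sym2 V, e.IsDiag → F e = 0) ∧
  (∀ v : V, Even (multiDeg F v)) ∧
  (supportGraph F).Connected

/-- A tour using only edges in the support of `x`. -/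
def IsTourSupp (x : Sym2 V → ℝ) (F : Sym2 V → ℕ) : Prop :=
  IsTour F ∧ ∀ e : Sym2 V, F e ≠ 0 → 0 < x e

/-- A tour of a (simple) graph `G`. -/
def IsTourOfGraph (G : SimpleGraph V) (F : Sym2 V → ℕ) : Prop :=
  IsTour F ∧ ∀ e : Sym2 V, F e ≠ 0 → e ∈ G.edgeSet

/-- Membership in `TSP(K_n)`: the convex hull of incidence vectors of tours. -/
def inTSP (y : Sym2 V → ℝ) : Prop :=
  ∃ (k : ℕ) (F : Fin k → Sym2 V → ℕ) (lam : Fin k → ℝ),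
    (∀ i, IsTour (F i)) ∧ (∀ i, 0 ≤ lam i) ∧ (∑ i, lam i = 1) ∧
    (∀ e : Sym2 V, y e = ∑ i, lam i * (F i e : ℝ))

/-- number of support edges incident on a vertex -/
def suppDeg (x : Sym2 V → ℝ) (v : V) : ℕ :=
  (Finset.univ.filter fun e : Sym2 V => 0 < x e ∧ v ∈ e).card

/-- A θ-cyclic point. -/
def IsCyclic (θ : ℝ) (x : Sym2 V → ℝ) : Prop :=
  0 < θ ∧ θ ≤ 1 / 2 ∧ inSUBT x ∧
  (∀ e : Sym2 V, x e = 0 ∨ x e = θ ∨ x e = 1 - θ ∨ x e = 1) ∧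
  (∀ v : V, suppDeg x v ≤ 3) ∧
  (∀ v : V, ∃ e : Sym2 V, v ∈ e ∧ x e = 1)

/-- The edges of the complete graph crossing the cut `U`. -/
def crossEdges (U : Finset V) : Finset (Sym2 V) :=
  Finset.univ.filter fun e : Sym2 V => ∃ u v : V, e = s(u, v) ∧ u ∈ U ∧ v ∉ U

/-- The support edges of `x` crossing the cut `U`. -/
def cutEdges (x : Sym2 V → ℝ) (U : Finset V) : Finset (Sym2 V) :=
  (crossEdges U).filter fun e => 0 < x e

/-- The edges of the graph `G` crossing the cut `U`. -/
def cutEdgesG (G : SimpleGraph V) (U : Finset V) : Finset (Sym2 V) :=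
  (crossEdges U).filter fun e => e ∈ G.edgeSet

/-- A critical cut of the support graph of `x`. -/
def IsCriticalCut (x : Sym2 V → ℝ) (U : Finset V) : Prop :=
  2 ≤ U.card ∧ 2 ≤ Uᶜ.card ∧
  (cutEdges x U).card = 3 ∧
  ((cutEdges x U).filter fun e => x e = 1).card = 1 ∧
  ∀ e ∈ cutEdges x U, ∀ f ∈ cutEdges x U, e ≠ f → ∀ w : V, w ∈ e → w ∈ f → False

/-- Vertex set after contracting the complement of `U` to a single pseudovertex `none`. -/
abbrev Contracted (U : Finset V) := Option {u : V // u ∈ U}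

/-- The contraction map sending every vertex outside of `U` to the pseudovertex. -/
def contractMap (U : Finset V) (w : V) : Contracted U :=
  if h : w ∈ U then some ⟨w, h⟩ else none

/-- The point induced on the contracted vertex set (loops are removed). -/
def contractPoint (x : Sym2 V → ℝ) (U : Finset V) : Sym2 (Contracted U) → ℝ :=
  fun d => if d.IsDiag then 0
    else ∑ e ∈ Finset.univ.filter (fun e : Sym2 V => Sym2.map (contractMap U) e = d), x e

/-- The eight allowed patterns, as multiplicity triples on `(e_u, f_u, g_u)`. -/
def patternOK (a b c : ℕ) : Prop :=
  (a, b, c) = (2, 0, 0) ∨ (a, b, c) = (1, 1, 0) ∨ (a, b, c) = (1, 0, 1) ∨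
  (a, b, c) = (2, 2, 0) ∨ (a, b, c) = (2, 0, 2) ∨ (a, b, c) = (2, 1, 1) ∨
  (a, b, c) = (1, 2, 1) ∨ (a, b, c) = (1, 1, 2)

/-- A handpicked tour (of the support of a cyclic point `x`): around every vertex `u` the
multiset of edges of the tour incident on `u` is one of the allowed patterns on the
1-edge and the two fractional edges at `u`. -/
def Handpicked (x : Sym2 V → ℝ) (F : Sym2 V → ℕ) : Prop :=
  ∀ u : V, ∃ e f g : Sym2 V,
    u ∈ e ∧ u ∈ f ∧ u ∈ g ∧ e ≠ f ∧ e ≠ g ∧ f ≠ g ∧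
    x e = 1 ∧ 0 < x f ∧ x f < 1 ∧ 0 < x g ∧ x g < 1 ∧
    (∀ e' : Sym2 V, 0 < x e' → u ∈ e' → e' = e ∨ e' = f ∨ e' = g) ∧
    patternOK (F e) (F f) (F g)

/-- `φ₂(e)`: total weight of the members of the combination in which `e` is doubled. -/
def phi2 {k : ℕ} (lam : Fin k → ℝ) (F : Fin k → Sym2 V → ℕ) (e : Sym2 V) : ℝ :=
  ∑ i ∈ Finset.univ.filter (fun i : Fin k => F i e = 2), lam i

/-- Frequency of the pattern whose multiplicities on the edges `(e, f, g)` are given by `p`. -/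
def patFreq {k : ℕ} (lam : Fin k → ℝ) (F : Fin k → Sym2 V → ℕ)
    (e f g : Sym2 V) (p : ℕ × ℕ × ℕ) : ℝ :=
  ∑ i ∈ Finset.univ.filter (fun i : Fin k => (F i e, F i f, F i g) = p), lam i

/-- The simple graph given by a finite set of edges. -/
def graphOfEdges (T : Finset (Sym2 V)) : SimpleGraph V where
  Adj u v := u ≠ v ∧ s(u, v) ∈ T
  symm := ⟨fun u v h => ⟨h.1.symm, by rw [Sym2.eq_swap]; exact h.2⟩⟩
  loopless := ⟨fun u h => h.1 rfl⟩

/-- Degree of a vertex in an edge set. -/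
def edgeDeg (T : Finset (Sym2 V)) (v : V) : ℕ := (T.filter fun e => v ∈ e).card

/-- A connector of the support graph of `x`: a connected spanning subgraph, no doubled edges. -/
def IsConnector (x : Sym2 V → ℝ) (T : Finset (Sym2 V)) : Prop :=
  (∀ e ∈ T, 0 < x e) ∧ (graphOfEdges T).Connected

/-- `M` is an induced matching of the support graph of `x` consisting of 1-edges. -/
def IsInducedMatching (x : Sym2 V → ℝ) (M : Finset (Sym2 V)) : Prop :=
  (∀ e ∈ M, x e = 1) ∧
  (∀ e ∈ M, ∀ f ∈ M, e ≠ f → ∀ w : V, w ∈ e → w ∈ f → False) ∧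
  (∀ e : Sym2 V, 0 < x e → (∀ w : V, w ∈ e → ∃ f ∈ M, w ∈ f) → e ∈ M)

/-- Property `P(v, M, Λ)` for a convex combination `{lam, T}` of connectors. -/
def PropertyP (x : Sym2 V → ℝ) (v : V) (M : Finset (Sym2 V)) (L : ℝ)
    {k : ℕ} (lam : Fin k → ℝ) (T : Fin k → Finset (Sym2 V)) : Prop :=
  (∑ i ∈ Finset.univ.filter (fun i : Fin k => edgeDeg (T i) v = 1), lam i) = L ∧
  (∑ i ∈ Finset.univ.filter (fun i : Fin k => edgeDeg (T i) v = 3), lam i) = L ∧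
  (∑ i ∈ Finset.univ.filter (fun i : Fin k => edgeDeg (T i) v = 2), lam i) = 1 - 2 * L ∧
  (∀ e ∈ M, ∀ w : V, w ∈ e → ∀ i, edgeDeg (T i) w = 2) ∧
  (∀ i, ((graphOfEdges (T i)).induce {u : V | u ≠ v}).Connected)

/-- An `O`-join of the support graph of `x`. -/
def IsOJoin (x : Sym2 V → ℝ) (O : Finset V) (J : Finset (Sym2 V)) : Prop :=
  (∀ e ∈ J, 0 < x e) ∧ ∀ v : V, (Odd (edgeDeg J v) ↔ v ∈ O)

/-- An `O`-join of the graph `G`. -/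
def IsOJoinOfGraph (G : SimpleGraph V) (O : Finset V) (J : Finset (Sym2 V)) : Prop :=
  (∀ e ∈ J, e ∈ G.edgeSet) ∧ ∀ v : V, (Odd (edgeDeg J v) ↔ v ∈ O)

/-- The support graph, after contracting the complement of `U`, of a multigraph on `V`
whose edges all have an endpoint in `U`. -/
def quotGraph (U : Finset V) (F : Sym2 V → ℕ) : SimpleGraph (Contracted U) where
  Adj a b := a ≠ b ∧ ∃ u v : V, 0 < F s(u, v) ∧ contractMap U u = a ∧ contractMap U v = b
  symm := ⟨fun a b h => ⟨h.1.symm, by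
    obtain ⟨u, v, h1, h2, h3⟩ := h.2
    exact ⟨v, u, by rw [Sym2.eq_swap]; exact h1, h3, h2⟩⟩⟩
  loopless := ⟨fun a h => h.1 rfl⟩

/-- A tour of the graph `G^U` obtained from `G` by contracting the complement of `U`,
encoded by the multiplicities of the surviving edges of `G` (those with an endpoint in `U`). -/
def IsTourOfContraction (G : SimpleGraph V) (U : Finset V) (F : Sym2 V → ℕ) : Prop :=
  (∀ e : Sym2 V, F e ≠ 0 → e ∈ G.edgeSet ∧ ∃ w, w ∈ e ∧ w ∈ U) ∧
  (∀ u ∈ U, Even (multiDeg F u)) ∧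
  Even (∑ u ∈ U, ∑ w ∈ Uᶜ, F s(u, w)) ∧
  (quotGraph U F).Connected

/-- The number of critical cuts of the support graph of `x`. -/
def criticalCutCount (x : Sym2 V → ℝ) : ℕ :=
  Set.ncard {U : Finset V | IsCriticalCut x U}

end TSPPaper

namespace TSPPaper

variable {V : Type*} [DecidableEq V] {U : Finset V} {x : Sym2 V → ℝ}

lemma contractMap_of_mem {u : V} (hu : u ∈ U) : contractMap U u = some ⟨u, hu⟩ :=
  dif_pos hu

lemma contractMap_eq_contractMap_iff {a b : V} :
    contractMap U a = contractMap U b ↔ a = b ∨ a ∉ U ∧ b ∉ U := by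
  unfold contractMap
  split_ifs <;> aesop

def SingleExit (x : Sym2 V → ℝ) (U : Finset V) : Prop :=
  ∀ u ∈ U, ∀ q₁ q₂ : V, q₁ ∉ U → q₂ ∉ U → 0 < x s(u, q₁) → 0 < x s(u, q₂) → q₁ = q₂

lemma SingleExit.eq_of_map_eq (hU : SingleExit x U) {u w p q : V} (hu : u ∈ U)
    (huw : 0 < x s(u, w)) (hpq : 0 < x s(p, q))
    (h : Sym2.map (contractMap U) s(u, w) = Sym2.map (contractMap U) s(p, q)) :
    s(u, w) = s(p, q) := by
  wlog hmatch : contractMap U u = contractMap U p ∧ contractMap U w = contractMap U q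
    generalizing p q
  · rw [Sym2.eq_swap (a := p)] at hpq h ⊢
    refine this hpq h ?_
    simp only [Sym2.map_mk, Sym2.eq_iff] at h
    exact h.resolve_right hmatch
  obtain ⟨hp, hq⟩ := hmatch
  obtain rfl : u = p := by simpa [hu] using contractMap_eq_contractMap_iff.mp hp
  rcases contractMap_eq_contractMap_iff.mp hq with rfl | ⟨hw, hq⟩
  · rfl
  · rw [hU u hu w q hw hq huw hpq]

variable [Fintype V]

lemma mem_cutEdges {e : Sym2 V} :
    e ∈ cutEdges x U ↔ e ∈ crossEdges U ∧ 0 < x e :=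
  Finset.mem_filter

lemma mem_crossEdges {e : Sym2 V} :
    e ∈ crossEdges U ↔ (∃ u ∈ e, u ∈ U) ∧ ∃ v ∈ e, v ∉ U := by
  induction e using Sym2.ind with
  | _ a b => grind [crossEdges]

lemma crossEdges_compl (U : Finset V) : crossEdges Uᶜ = crossEdges U := by
  ext e
  simp only [mem_crossEdges, Finset.mem_compl, not_not]
  exact and_comm

lemma IsCriticalCut.compl (h : IsCriticalCut x U) :
    IsCriticalCut x Uᶜ := by
  obtain ⟨h1, h2, h3, h4, h5⟩ := h
  simp only [IsCriticalCut, cutEdges, crossEdges_compl, compl_compl]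
  exact ⟨h2, h1, h3, h4, h5⟩

lemma map_mem_crossEdges_iff {W : Type*} [Fintype W] [DecidableEq W] (g : V → W)
    (S : Finset W) (e : Sym2 V) :
    Sym2.map g e ∈ crossEdges S ↔ e ∈ crossEdges (Finset.univ.filter fun v => g v ∈ S) := by
  simp [mem_crossEdges, Sym2.mem_map]

lemma IsCriticalCut.of_image {W : Type*} [Fintype W] [DecidableEq W] {y : Sym2 W → ℝ}
    {B : Finset W} (hB : IsCriticalCut y B) (g : V → W) {A : Finset V}
    (hA : 2 ≤ A.card) (hAc : 2 ≤ Aᶜ.card) (hinj : Set.InjOn (Sym2.map g) (cutEdges x A))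
    (himage : cutEdges y B = (cutEdges x A).image (Sym2.map g))
    (hval : ∀ e ∈ cutEdges x A, y (Sym2.map g e) = x e) : IsCriticalCut x A := by
  obtain ⟨-, -, hcard, hone, hdisj⟩ := hB
  have hone_image : (cutEdges y B).filter (fun d => y d = 1)
      = ((cutEdges x A).filter fun e => x e = 1).image (Sym2.map g) := by
    rw [himage, Finset.filter_image]
    exact congrArg _ (Finset.filter_congr fun e he => by rw [hval e he])
  have hmem : ∀ e ∈ cutEdges x A, Sym2.map g e ∈ cutEdges y B := fun e he =>
    himage ▸ Finset.mem_image_of_mem _ he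
  refine ⟨hA, hAc, ?_, ?_, fun e he f hf hef w hwe hwf => ?_⟩
  · rwa [himage, Finset.card_image_of_injOn hinj] at hcard
  · rwa [hone_image, Finset.card_image_of_injOn
      (hinj.mono (Finset.coe_subset.mpr (Finset.filter_subset _ _)))] at hone
  · exact hdisj _ (hmem e he) _ (hmem f hf) (fun h => hef (hinj he hf h)) (g w)
      (Sym2.mem_map.mpr ⟨w, hwe, rfl⟩) (Sym2.mem_map.mpr ⟨w, hwf, rfl⟩)

lemma IsCriticalCut.singleExit (hU : IsCriticalCut x U) : SingleExit x U := by
  intro u hu q₁ q₂ hq₁ hq₂ hpos₁ hpos₂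
  by_contra hne
  have hmem : ∀ q ∉ U, 0 < x s(u, q) → s(u, q) ∈ cutEdges x U := fun q hq hpos =>
    mem_cutEdges.mpr ⟨mem_crossEdges.mpr ⟨⟨u, by simp, hu⟩, ⟨q, by simp, hq⟩⟩, hpos⟩
  exact hU.2.2.2.2 _ (hmem q₁ hq₁ hpos₁) _ (hmem q₂ hq₂ hpos₂)
    (fun h => hne (Sym2.congr_right.mp h)) u (by simp) (by simp)

lemma SingleExit.contractPoint_map (hU : SingleExit x U) (hge : ∀ e, 0 ≤ x e) {u w : V}
    (hu : u ∈ U) (hne : contractMap U u ≠ contractMap U w) (hpos : 0 < x s(u, w)) :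
    contractPoint x U (Sym2.map (contractMap U) s(u, w)) = x s(u, w) := by
  rw [contractPoint, if_neg (by simpa using hne)]
  refine Finset.sum_eq_single_of_mem _ (Finset.mem_filter.mpr ⟨Finset.mem_univ _, rfl⟩)
    fun e he hne' => ?_
  induction e using Sym2.ind with
  | _ p q =>
    refine le_antisymm (not_lt.mp fun hpq => hne' ?_) (hge _)
    exact (hU.eq_of_map_eq hu hpos hpq (Finset.mem_filter.mp he).2.symm).symm

lemma exists_pos_of_contractPoint_pos {d : Sym2 (Contracted U)} (h : 0 < contractPoint x U d) :
    ∃ e, Sym2.map (contractMap U) e = d ∧ 0 < x e := by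
  unfold contractPoint at h
  split_ifs at h
  · exact absurd h (lt_irrefl 0)
  by_contra! hnonpos
  exact h.not_ge (Finset.sum_nonpos fun e he => hnonpos e (Finset.mem_filter.mp he).2)

def liftCut (U : Finset V) (S : Finset (Contracted U)) : Finset V :=
  Finset.univ.filter fun v => contractMap U v ∈ S

variable {S : Finset (Contracted U)}

lemma mem_liftCut {v : V} : v ∈ liftCut U S ↔ contractMap U v ∈ S := by
  simp [liftCut]

lemma liftCut_subset (hS : none ∉ S) : liftCut U S ⊆ U := by
  intro v hv
  by_contra hvU
  rw [mem_liftCut, contractMap, dif_neg hvU] at hv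
  exact hS hv

lemma liftCut_ssubset (hS : none ∉ S) (hSc : 2 ≤ Sᶜ.card) : liftCut U S ⊂ U := by
  refine (Finset.ssubset_iff_of_subset (liftCut_subset hS)).mpr ?_
  obtain ⟨b, hb, hbnone⟩ := Finset.exists_mem_ne hSc none
  obtain ⟨⟨u, hu⟩, rfl⟩ := Option.ne_none_iff_exists'.mp hbnone
  exact ⟨u, hu, fun hlift => Finset.mem_compl.mp hb
    (contractMap_of_mem hu ▸ mem_liftCut.mp hlift)⟩

lemma two_le_card_liftCut (hS : none ∉ S) (hcard : 2 ≤ S.card) : 2 ≤ (liftCut U S).card := by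
  have hsub : S ⊆ (liftCut U S).image (contractMap U) := fun a ha => by
    obtain ⟨⟨u, hu⟩, rfl⟩ := Option.ne_none_iff_exists'.mp (ne_of_mem_of_not_mem ha hS)
    exact Finset.mem_image.mpr
      ⟨u, mem_liftCut.mpr (contractMap_of_mem hu ▸ ha), contractMap_of_mem hu⟩
  exact hcard.trans ((Finset.card_le_card hsub).trans Finset.card_image_le)

lemma SingleExit.contractPoint_map_of_mem_cutEdges (hU : SingleExit x U) (hge : ∀ e, 0 ≤ x e)
    (hS : none ∉ S) {e : Sym2 V} (he : e ∈ cutEdges x (liftCut U S)) :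
    contractPoint x U (Sym2.map (contractMap U) e) = x e := by
  obtain ⟨hcross, hpos⟩ := mem_cutEdges.mp he
  obtain ⟨⟨u, hue, hu⟩, ⟨w, hwe, hw⟩⟩ := mem_crossEdges.mp hcross
  obtain rfl := (Sym2.mem_and_mem_iff (ne_of_mem_of_not_mem hu hw)).mp ⟨hue, hwe⟩
  refine hU.contractPoint_map hge (liftCut_subset hS hu) (fun h => hw ?_) hpos
  exact mem_liftCut.mpr (h ▸ mem_liftCut.mp hu)

lemma SingleExit.injOn_cutEdges_liftCut (hU : SingleExit x U) (hS : none ∉ S) :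
    Set.InjOn (Sym2.map (contractMap U)) (cutEdges x (liftCut U S)) := by
  intro e he f hf h
  obtain ⟨hcross, hpos⟩ := mem_cutEdges.mp he
  obtain ⟨⟨u, hue, hu⟩, ⟨w, hwe, hw⟩⟩ := mem_crossEdges.mp hcross
  obtain rfl := (Sym2.mem_and_mem_iff (ne_of_mem_of_not_mem hu hw)).mp ⟨hue, hwe⟩
  induction f using Sym2.ind with
  | _ p q => exact hU.eq_of_map_eq (liftCut_subset hS hu) hpos (mem_cutEdges.mp hf).2 h

lemma SingleExit.cutEdges_contractPoint (hU : SingleExit x U) (hge : ∀ e, 0 ≤ x e)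
    (hS : none ∉ S) :
    cutEdges (contractPoint x U) S
      = (cutEdges x (liftCut U S)).image (Sym2.map (contractMap U)) := by
  ext d
  simp only [Finset.mem_image]
  constructor
  · intro hd
    obtain ⟨hcross, hpos⟩ := mem_cutEdges.mp hd
    obtain ⟨e, rfl, he⟩ := exists_pos_of_contractPoint_pos hpos
    exact ⟨e, mem_cutEdges.mpr ⟨(map_mem_crossEdges_iff _ _ e).mp hcross, he⟩, rfl⟩
  · rintro ⟨e, he, rfl⟩
    refine mem_cutEdges.mpr ⟨(map_mem_crossEdges_iff _ _ e).mpr (mem_cutEdges.mp he).1, ?_⟩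
    rw [hU.contractPoint_map_of_mem_cutEdges hge hS he]
    exact (mem_cutEdges.mp he).2

lemma IsCriticalCut.of_contractPoint (hU : IsCriticalCut x U) (hge : ∀ e, 0 ≤ x e)
    (hcrit : IsCriticalCut (contractPoint x U) S) (hS : none ∉ S) :
    IsCriticalCut x (liftCut U S) :=
  hcrit.of_image (contractMap U) (two_le_card_liftCut hS hcrit.1)
    (hU.2.1.trans (Finset.card_le_card (Finset.compl_subset_compl.mpr (liftCut_subset hS))))
    (hU.singleExit.injOn_cutEdges_liftCut hS) (hU.singleExit.cutEdges_contractPoint hge hS)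
    fun _ he => hU.singleExit.contractPoint_map_of_mem_cutEdges hge hS he

theorem statement10_general (n : ℕ) (θ : ℝ) (x : Sym2 (Fin n) → ℝ)
    (hx : IsCyclic θ x)
    (U : Finset (Fin n)) (hcrit : IsCriticalCut x U)
    (hmin : ∀ S : Finset (Fin n), S ⊂ U → ¬ IsCriticalCut x S) :
    ∀ S : Finset (Contracted U), ¬ IsCriticalCut (contractPoint x U) S := by
  obtain ⟨-, -, ⟨-, hge, -⟩, -⟩ := hx
  intro S hS
  wlog hnone : none ∉ S generalizing S
  · exact this Sᶜ hS.compl (by simpa using hnone)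
  exact hmin _ (liftCut_ssubset hnone hS.2.1) (hcrit.of_contractPoint hge hS hnone)

/-- Observation `obs:cornercut`. If `U` is a minimal critical cut of `G_x`,
then the contracted graph `G_x^U` (with its induced point) has no critical cuts. -/
theorem statement10 (n : ℕ) (hn : 3 ≤ n) (θ : ℝ) (x : Sym2 (Fin n) → ℝ)
    (hx : IsCyclic θ x) (hcubic : ∀ v : Fin n, suppDeg x v = 3)
    (U : Finset (Fin n)) (hcrit : IsCriticalCut x U)
    (hmin : ∀ S : Finset (Fin n), S ⊂ U → ¬ IsCriticalCut x S) :
    ∀ S : Finset (Contracted U), ¬ IsCriticalCut (contractPoint x U) S :=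
  statement10_general n θ x hx U hcrit hmin

end TSPPaper
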